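/- Suppose u, v ∈ Σ* satisfy q.u = q.v for all q ∈ A* (i.e., u ≡ v). If u = x̄₁ x₂ x̄₂ x₃ and v = ȳ₁ y₂ ȳ₂ y₃ with xᵢ, yᵢ ∈ A* (where w̄ denotes the letter-wise barred copy of w ∈ A*), then x₁ = y₁, x₂ = y₂, and x₃ = y₃. (Thus the normal form of a queue action is unique.) -/
import Mathlib


/-- A basic queue action: write a letter or read a letter. -/
inductive Act (A : Type) : Type
  | wr (a : A)
  | rd (a : A)
deriving DecidableEq

variable {A : Type} [DecidableEq A]

/-- The action of words over `Act A` on queue states `A* ∪ {⊥}` (⊥ = `none`). -/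
def act : Option (List A) → List (Act A) → Option (List A)
  | q, [] => q
  | none, _ :: _ => none
  | some q, (Act.wr a) :: u => act (some (q ++ [a])) u
  | some q, (Act.rd a) :: u =>
    match q with
    | [] => none
    | b :: q' => if b = a then act (some q') u else none

/-- Two words over `Act A` are equivalent if they act identically on all queues. -/
def qequiv (u v : List (Act A)) : Prop := ∀ q : List A, act (some q) u = act (some q) v

/-- Writing the word `w`. -/
def W (w : List A) : List (Act A) := w.map Act.wr

/-- Reading the word `w` (the barred copy of `w`). -/
def R (w : List A) : List (Act A) := w.map Act.rd

/-- `shuffle s` is the word `s₁ s̄₁ s₂ s̄₂ … sₖ s̄ₖ`. -/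
def shuffle (s : List A) : List (Act A) := s.flatMap fun a => [Act.wr a, Act.rd a]

/-- The projection to write letters. -/
def prW (w : List (Act A)) : List A :=
  w.filterMap fun x => match x with | Act.wr a => some a | Act.rd _ => none

/-- The projection to read letters (with the bars removed). -/
def prR (w : List (Act A)) : List A :=
  w.filterMap fun x => match x with | Act.wr _ => none | Act.rd a => some a

theorem act_append (u v : List (Act A)) : ∀ q, act q (u ++ v) = act (act q u) v := by
  induction u with
  | nil =>
      intro q
      cases q <;> rfl
  | cons x u ih =>
      intro q
      cases q with
      | none =>
          simp only [List.cons_append, act]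
          cases v with
          | nil => rfl
          | cons _ _ => rfl
      | some q =>
          cases x with
          | wr a => simpa [act] using ih _
          | rd a =>
              cases q with
              | nil =>
                  simp only [List.cons_append, act]
                  cases v with
                  | nil => rfl
                  | cons _ _ => rfl
              | cons b q' =>
                  by_cases h : b = a
                  · simp [List.cons_append, act, h, ih]
                  · simp only [List.cons_append, act, if_neg h]
                    cases v with
                    | nil => rfl
                    | cons _ _ => rfl

/-- The setoid of queue-action equivalence. -/
def qsetoid (A : Type) [DecidableEq A] : Setoid (List (Act A)) :=
  ⟨qequiv, ⟨fun _ _ => rfl, fun h q => (h q).symm, fun h1 h2 q => (h1 q).trans (h2 q)⟩⟩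

/-- The monoid of queue actions. -/
def QAct (A : Type) [DecidableEq A] : Type := Quotient (qsetoid A)

theorem act_none : ∀ v : List (Act A), act (none : Option (List A)) v = none
  | [] => rfl
  | _ :: _ => rfl

theorem qequiv_append {u u' v v' : List (Act A)} (hu : qequiv u u') (hv : qequiv v v') :
    qequiv (u ++ v) (u' ++ v') := by
  intro q
  rw [act_append, act_append, hu q]
  cases h : act (some q) u' with
  | none => rw [act_none, act_none]
  | some q' => exact hv q'

instance : Monoid (QAct A) where
  mul := Quotient.map₂ (· ++ ·) (fun _ _ hu _ _ hv => qequiv_append hu hv)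
  one := Quotient.mk (qsetoid A) []
  mul_assoc := by
    rintro ⟨u⟩ ⟨v⟩ ⟨w⟩
    exact congrArg (Quotient.mk (qsetoid A)) (List.append_assoc u v w)
  one_mul := by
    rintro ⟨u⟩
    rfl
  mul_one := by
    rintro ⟨u⟩
    exact congrArg (Quotient.mk (qsetoid A)) (List.append_nil u)

/-- The class of a word in the monoid of queue actions. -/
def cls (w : List (Act A)) : QAct A := Quotient.mk (qsetoid A) w

theorem cls_mul (u v : List (Act A)) : cls u * cls v = cls (u ++ v) := rfl

theorem act_W (w : List A) : ∀ q : List A, act (some q) (W w) = some (q ++ w) := by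
  induction w with
  | nil => intro q; simp [W, act]
  | cons a w ih => intro q; simp [W, act] at ih ⊢; rw [ih]; simp

theorem act_R_of (w : List A) : ∀ t : List A, act (some (w ++ t)) (R w) = some t := by
  induction w with
  | nil => intro t; simp [R, act]
  | cons a w ih => intro t; simpa [R, act] using ih t

theorem act_R_eq (w : List A) : ∀ q t : List A,
    act (some q) (R w) = some t → q = w ++ t := by
  induction w with
  | nil => intro q t h; simpa [R, act] using h
  | cons a w ih =>
      intro q t h
      cases q with
      | nil => simp [R, act] at h
      | cons b q' =>
        by_cases hb : b = a
        · subst hb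
          simp only [R, List.map_cons, act, if_pos rfl] at h
          have := ih q' t h
          simp [this]
        · simp [R, act, hb] at h

theorem act_some_of_append {u v : List (Act A)} {q : List A} {r : List A}
    (h : act (some q) (u ++ v) = some r) : ∃ q', act (some q) u = some q' := by
  rw [act_append] at h
  cases hu : act (some q) u with
  | none => rw [hu, act_none] at h; exact absurd h (by simp)
  | some q' => exact ⟨q', rfl⟩

/-- Evaluating the normal form on the state `w₁`. -/
theorem act_nf_self (w₁ w₂ w₃ : List A) :
    act (some w₁) (R w₁ ++ W w₂ ++ R w₂ ++ W w₃) = some w₃ := by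
  rw [act_append, act_append, act_append]
  have h1 : act (some w₁) (R w₁) = some [] := by
    simpa using act_R_of w₁ []
  rw [h1, act_W]
  have h2 : act (some ([] ++ w₂)) (R w₂) = some [] := by
    simpa using act_R_of w₂ []
  rw [h2, act_W]
  simp

/-- Evaluating the normal form on the state `w₁ ++ (w₂ ++ z)`. -/
theorem act_nf_ext (w₁ w₂ w₃ z : List A) :
    act (some (w₁ ++ (w₂ ++ z))) (R w₁ ++ W w₂ ++ R w₂ ++ W w₃) =
      some (z ++ w₂ ++ w₃) := by
  rw [act_append, act_append, act_append, act_R_of, act_W]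
  have h2 : act (some (w₂ ++ z ++ w₂)) (R w₂) = some (z ++ w₂) := by
    rw [List.append_assoc]; exact act_R_of w₂ (z ++ w₂)
  rw [h2, act_W]

theorem prefix_aux [Nontrivial A] {x y : List A} (hp : ∀ z : List A, y <+: x ++ z ++ y) :
    y.length ≤ x.length ∧ (y.length = x.length → y = x) := by
  obtain ⟨a, b, hab⟩ := exists_pair_ne A
  have key : ∀ c : A, y = x.take y.length ++
      (List.replicate y.length c).take (y.length - x.length) := by
    intro c
    have h := hp (List.replicate y.length c)
    obtain ⟨t, ht⟩ := h
    have : y = (x ++ List.replicate y.length c ++ y).take y.length := by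
      rw [← ht]; simp
    rw [List.append_assoc, List.take_append,
      List.take_append, List.length_replicate,
      Nat.sub_eq_zero_of_le (Nat.sub_le _ _)] at this
    simpa using this
  constructor
  · by_contra hlt
    push_neg at hlt
    have hpos : 0 < y.length - x.length := Nat.sub_pos_of_lt hlt
    have hb := (key a).symm.trans (key b)
    have := List.append_cancel_left hb
    have h2 : ((List.replicate y.length a).take (y.length - x.length)).head? =
        ((List.replicate y.length b).take (y.length - x.length)).head? := by rw [this]
    have hlen : y.length - x.length ≤ y.length := Nat.sub_le _ _
    rw [List.take_replicate, List.take_replicate, Nat.min_eq_left hlen] at h2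
    cases hk : y.length - x.length with
    | zero => omega
    | succ n =>
      rw [hk] at h2
      simp [List.replicate_succ] at h2
      exact hab h2
  · intro hlen
    have := key a
    rw [hlen] at this
    simpa [Nat.sub_self] using this

/-- Uniqueness of normal forms: if `x̄₁ x₂ x̄₂ x₃ ≡ ȳ₁ y₂ ȳ₂ y₃` then the components agree. -/
theorem stmt7 [Fintype A] [Nontrivial A] (x₁ x₂ x₃ y₁ y₂ y₃ : List A)
    (h : qequiv (R x₁ ++ W x₂ ++ R x₂ ++ W x₃) (R y₁ ++ W y₂ ++ R y₂ ++ W y₃)) :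
    x₁ = y₁ ∧ x₂ = y₂ ∧ x₃ = y₃ := by
  -- reading off the first component
  have read_pre : ∀ (w₁ w₂ w₃ q r : List A),
      act (some q) (R w₁ ++ W w₂ ++ R w₂ ++ W w₃) = some r → ∃ s, q = w₁ ++ s := by
    intro w₁ w₂ w₃ q r hq
    have hq' : act (some q) (R w₁ ++ (W w₂ ++ (R w₂ ++ W w₃))) = some r := by
      simpa [List.append_assoc] using hq
    obtain ⟨q', hq''⟩ := act_some_of_append hq'
    exact ⟨q', act_R_eq w₁ q q' hq''⟩
  have hx1 : x₁ = y₁ := by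
    have h1 : act (some y₁) (R x₁ ++ W x₂ ++ R x₂ ++ W x₃) = some y₃ := by
      rw [h y₁]; exact act_nf_self y₁ y₂ y₃
    have h2 : act (some x₁) (R y₁ ++ W y₂ ++ R y₂ ++ W y₃) = some x₃ := by
      rw [← h x₁]; exact act_nf_self x₁ x₂ x₃
    obtain ⟨s, hs⟩ := read_pre x₁ x₂ x₃ y₁ y₃ h1
    obtain ⟨s', hs'⟩ := read_pre y₁ y₂ y₃ x₁ x₃ h2
    rw [hs', List.append_assoc] at hs
    have hs0 : s'.length = 0 := by
      have := congrArg List.length hs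
      simp only [List.length_append] at this
      omega
    rw [hs', List.eq_nil_of_length_eq_zero hs0, List.append_nil]
  subst hx1
  have hx3 : x₃ = y₃ := by
    have h2 := h x₁
    rw [act_nf_self x₁ x₂ x₃, act_nf_self x₁ y₂ y₃] at h2
    exact Option.some_injective _ h2
  subst hx3
  refine ⟨rfl, ?_, rfl⟩
  -- the prefix property in both directions
  have hyx : ∀ z : List A, y₂ <+: x₂ ++ z ++ y₂ := by
    intro z
    have hz := h (x₁ ++ (x₂ ++ z))
    rw [act_nf_ext x₁ x₂ x₃ z] at hz
    rw [act_append, act_append, act_append, act_R_of, act_W] at hz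
    cases hr : act (some (x₂ ++ z ++ y₂)) (R y₂) with
    | none => rw [hr, act_none] at hz; exact absurd hz (by simp)
    | some t =>
        have := act_R_eq y₂ _ t hr
        exact ⟨t, this.symm⟩
  have hxy : ∀ z : List A, x₂ <+: y₂ ++ z ++ x₂ := by
    intro z
    have hz := (h (x₁ ++ (y₂ ++ z))).symm
    rw [act_nf_ext x₁ y₂ x₃ z] at hz
    rw [act_append, act_append, act_append, act_R_of, act_W] at hz
    cases hr : act (some (y₂ ++ z ++ x₂)) (R x₂) with
    | none => rw [hr, act_none] at hz; exact absurd hz (by simp)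
    | some t =>
        have := act_R_eq x₂ _ t hr
        exact ⟨t, this.symm⟩
  have p1 := prefix_aux hyx
  have p2 := prefix_aux hxy
  have hlen : y₂.length = x₂.length := le_antisymm p1.1 p2.1
  exact (p1.2 hlen).symm
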